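/- arXiv:math/0303235 — 7 statements merged into one kernel-verified Lean document; each statement's English description precedes it below -/
import Mathlib

section
/- Let T_t be a C0-semigroup on a Hilbert space H with generator A satisfying ‖T_t‖ ≤ M e^{γt} for all t ≥ 0. If u is a unit vector, λ ∈ ℂ, 0 < ε < 1/2, and there exists w ∈ Dom(A) with ‖u − w‖ + ‖Aw − λw‖ < ε, then Re(λ) ≤ γ + 2Mε. -/
/-!
Suppose `Re λ > γ` and put `c = Re λ - γ`. For `w ∈ Dom(A)` the curve `f t = e^{-λt} T_t w`
starts at `w`, has derivative `e^{-λt} T_t (Aw - λw)` of norm at most `M ‖Aw - λw‖ e^{-ct}`, and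
itself decays like `M ‖w‖ e^{-ct}`. Integrating the derivative and letting `t → ∞` gives
`c ‖w‖ ≤ M ‖Aw - λw‖`. Here `‖w‖ > 1 - ε > 1/2` and `‖Aw - λw‖ < ε`, so `c < 2Mε`.
-/

open Filter Set Topology

theorem norm_sub_le_div_of_norm_deriv_le_exp {E : Type*} [NormedAddCommGroup E]
    [NormedSpace ℝ E] {f f' : ℝ → E} {K c : ℝ} (hc : 0 < c)
    (hf : ∀ s, 0 ≤ s → HasDerivAt f (f' s) s)
    (hf' : ∀ s, 0 ≤ s → ‖f' s‖ ≤ K * Real.exp (-(c * s))) {t : ℝ} (ht : 0 ≤ t) :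
    ‖f t - f 0‖ ≤ K / c := by
  have hK : 0 ≤ K := by simpa using (norm_nonneg _).trans (hf' 0 le_rfl)
  set B : ℝ → ℝ := fun x => K / c * (1 - Real.exp (-(c * x)))
  have hB : ∀ x, HasDerivAt B (K * Real.exp (-(c * x))) x := by
    intro x
    have hlin : HasDerivAt (fun x : ℝ => -(c * x)) (-c) x := by
      simpa using ((hasDerivAt_id x).const_mul c).fun_neg
    refine ((hlin.exp.const_sub 1).const_mul (K / c)).congr_deriv ?_
    field_simp
  have hfence : ‖f t - f 0‖ ≤ B t :=
    image_norm_le_of_norm_deriv_right_le_deriv_boundary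
      (fun x hx => ((hf x hx.1).sub_const (f 0)).continuousAt.continuousWithinAt)
      (fun x hx => ((hf x hx.1).sub_const (f 0)).hasDerivWithinAt)
      (by simp [B]) hB (fun x hx => hf' x hx.1) (right_mem_Icc.2 ht)
  calc ‖f t - f 0‖ ≤ B t := hfence
    _ ≤ K / c := by
        have := Real.exp_nonneg (-(c * t))
        simp only [B]
        nlinarith [div_nonneg hK hc.le]

section SemigroupEstimates

variable {E : Type*} [NormedAddCommGroup E] [NormedSpace ℂ E]

theorem norm_cexp_neg_mul_ofReal (lam : ℂ) (s : ℝ) :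
    ‖Complex.exp (-lam * s)‖ = Real.exp (-(lam.re * s)) := by
  rw [Complex.norm_exp, Complex.re_mul_ofReal, Complex.neg_re, neg_mul]

theorem HasDerivAt.cexp_neg_mul_smul {g : ℝ → E} {g' : E} {s : ℝ} (hg : HasDerivAt g g' s)
    (lam : ℂ) :
    HasDerivAt (fun r : ℝ => Complex.exp (-lam * r) • g r)
      (Complex.exp (-lam * s) • (g' - lam • g s)) s := by
  have hexp : HasDerivAt (fun r : ℝ => Complex.exp (-lam * r))
      (Complex.exp (-lam * s) * (-lam)) s := by
    have hlin : HasDerivAt (fun r : ℝ => -lam * (r : ℂ)) (-lam) s := by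
      simpa using (Complex.ofRealCLM.hasDerivAt (x := s)).const_mul (-lam)
    exact hlin.cexp
  refine (hexp.smul hg).congr_deriv ?_
  rw [smul_sub, smul_smul, mul_smul, mul_smul]
  module

theorem norm_cexp_neg_mul_smul_apply_le (L : E →L[ℂ] E) {M γ s : ℝ}
    (hL : ‖L‖ ≤ M * Real.exp (γ * s)) (lam : ℂ) (x : E) :
    ‖Complex.exp (-lam * s) • L x‖ ≤ M * ‖x‖ * Real.exp (-((lam.re - γ) * s)) :=
  calc ‖Complex.exp (-lam * s) • L x‖
      = Real.exp (-(lam.re * s)) * ‖L x‖ := by rw [norm_smul, norm_cexp_neg_mul_ofReal]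
    _ ≤ Real.exp (-(lam.re * s)) * (M * Real.exp (γ * s) * ‖x‖) := by
        gcongr
        exact L.le_of_opNorm_le hL x
    _ = M * ‖x‖ * Real.exp (-((lam.re - γ) * s)) := by
        rw [show -((lam.re - γ) * s) = -(lam.re * s) + γ * s by ring, Real.exp_add]
        ring

/-- The Hille–Yosida bound `‖(λ - A)⁻¹‖ ≤ M / (Re λ - γ)`, tested on one vector `w` with
`v = A w`. -/
theorem sub_mul_norm_le_of_hasDerivAt_semigroup (T : ℝ → E →L[ℂ] E) (hT0 : T 0 = 1) {M γ : ℝ}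
    (hTnorm : ∀ t : ℝ, 0 ≤ t → ‖T t‖ ≤ M * Real.exp (γ * t)) {w v : E}
    (hw : ∀ t : ℝ, 0 ≤ t → HasDerivAt (fun r => T r w) (T t v) t) {lam : ℂ}
    (hlam : γ < lam.re) :
    (lam.re - γ) * ‖w‖ ≤ M * ‖v - lam • w‖ := by
  set c := lam.re - γ
  have hc : 0 < c := sub_pos.2 hlam
  set f : ℝ → E := fun s => Complex.exp (-lam * s) • T s w
  have hf : ∀ s : ℝ, 0 ≤ s → HasDerivAt f (Complex.exp (-lam * s) • T s (v - lam • w)) s := by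
    intro s hs
    simpa only [map_sub, map_smul] using (hw s hs).cexp_neg_mul_smul lam
  have hdrift : ∀ t, 0 ≤ t → ‖f t - w‖ ≤ M * ‖v - lam • w‖ / c := by
    intro t ht
    simpa [f, hT0] using norm_sub_le_div_of_norm_deriv_le_exp hc hf
      (fun s hs => norm_cexp_neg_mul_smul_apply_le _ (hTnorm s hs) lam _) ht
  have hdecay : Tendsto (fun t => M * ‖w‖ * Real.exp (-(c * t)) + M * ‖v - lam • w‖ / c)
      atTop (𝓝 (M * ‖v - lam • w‖ / c)) := by
    have hexp : Tendsto (fun t => Real.exp (-(c * t))) atTop (𝓝 0) :=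
      Real.tendsto_exp_atBot.comp (tendsto_neg_atTop_atBot.comp (tendsto_id.const_mul_atTop hc))
    simpa using (hexp.const_mul (M * ‖w‖)).add_const (M * ‖v - lam • w‖ / c)
  have hbound : ∀ t, 0 ≤ t → ‖w‖ ≤ M * ‖w‖ * Real.exp (-(c * t)) + M * ‖v - lam • w‖ / c := by
    intro t ht
    calc ‖w‖ ≤ ‖f t‖ + ‖f t - w‖ := norm_le_norm_add_norm_sub (f t) w
      _ ≤ _ := add_le_add (norm_cexp_neg_mul_smul_apply_le _ (hTnorm t ht) lam w) (hdrift t ht)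
  have hw_le : ‖w‖ ≤ M * ‖v - lam • w‖ / c :=
    ge_of_tendsto hdecay (eventually_atTop.2 ⟨0, hbound⟩)
  rw [le_div_iff₀ hc] at hw_le
  linarith

end SemigroupEstimates

theorem approximate_eigenvalue_re_bound_general
    {H : Type*} [NormedAddCommGroup H] [InnerProductSpace ℂ H]
    (T : ℝ → H →L[ℂ] H)
    (hT0 : T 0 = 1)
    (M γ : ℝ) (hM : 1 ≤ M)
    (hTnorm : ∀ t : ℝ, 0 ≤ t → ‖T t‖ ≤ M * Real.exp (γ * t))
    (D : Set H) (A : H → H)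
    (hgen : ∀ w ∈ D, ∀ t : ℝ, 0 ≤ t → HasDerivAt (fun r => T r w) (T t (A w)) t)
    (ε : ℝ) (hε : ε < 1 / 2)
    (u : H) (hu : ‖u‖ = 1) (lam : ℂ)
    (happrox : ∃ w ∈ D, ‖u - w‖ + ‖A w - lam • w‖ < ε) :
    lam.re ≤ γ + 2 * M * ε := by
  obtain ⟨w, hwD, hw⟩ := happrox
  have hw_norm : 1 - ε < ‖w‖ := by
    have := norm_sub_norm_le u w
    linarith [norm_nonneg (A w - lam • w)]
  have hMr : M * ‖A w - lam • w‖ ≤ M * ε := by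
    gcongr
    linarith [norm_nonneg (u - w)]
  by_contra! hlam
  have hgap : 0 < lam.re - γ := by nlinarith [norm_nonneg (A w - lam • w)]
  have hresolvent := sub_mul_norm_le_of_hasDerivAt_semigroup T hT0 hTnorm (hgen w hwD)
    (sub_pos.1 hgap)
  nlinarith [mul_pos hgap (show 0 < ‖w‖ - 1 / 2 by linarith)]

/-- Let `T_t` be a C₀-semigroup on a Hilbert space `H` with generator `A`
satisfying `‖T_t‖ ≤ M e^{γt}` for `t ≥ 0`.  If `u` is a unit vector, `λ ∈ ℂ`,
`0 < ε < 1/2`, and there is `w ∈ Dom(A)` with `‖u − w‖ + ‖Aw − λw‖ < ε`, then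
`Re(λ) ≤ γ + 2Mε`. -/
theorem approximate_eigenvalue_re_bound
    {H : Type*} [NormedAddCommGroup H] [InnerProductSpace ℂ H] [CompleteSpace H]
    (T : ℝ → H →L[ℂ] H)
    (hT0 : T 0 = 1)
    (hTadd : ∀ s t : ℝ, 0 ≤ s → 0 ≤ t → T (s + t) = (T s).comp (T t))
    (M γ : ℝ) (hM : 1 ≤ M)
    (hTnorm : ∀ t : ℝ, 0 ≤ t → ‖T t‖ ≤ M * Real.exp (γ * t))
    (D : Set H) (A : H → H)
    (hgen : ∀ w ∈ D, ∀ t : ℝ, 0 ≤ t → HasDerivAt (fun r => T r w) (T t (A w)) t)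
    (ε : ℝ) (hε0 : 0 < ε) (hε : ε < 1 / 2)
    (u : H) (hu : ‖u‖ = 1) (lam : ℂ)
    (happrox : ∃ w ∈ D, ‖u - w‖ + ‖A w - lam • w‖ < ε) :
    lam.re ≤ γ + 2 * M * ε :=
  approximate_eigenvalue_re_bound_general T hT0 M γ hM hTnorm D A hgen ε hε u hu lam happrox
end

section
/- If w ∈ Dom(A), λ ∈ ℂ with μ = Re(λ), and ‖Aw − λw‖ < ε, then for all t ≥ 0, ‖T_t w − e^{λt} w‖ ≤ Mε (e^{μt} − e^{γt})/(μ − γ) when μ ≠ γ, this bound being obtained from the identity T_t w − e^{λt} w = ∫_0^t T_{t−s} e^{λs} (λw − Aw) ds. -/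
/-!
The path `g s = e^{λ s} • T_{t-s} w` runs from `g 0 = T_t w` to `g t = e^{λ t} w`, and its
derivative `e^{λ s} • T_{t-s} (λ w - A w)` has norm at most `M ε e^{γ t} e^{(μ - γ) s}`.
Comparing `‖g s - g 0‖` with the primitive `M ε e^{γ t} (e^{(μ - γ) s} - 1) / (μ - γ)` of this
bound (the fencing form of the mean value theorem) gives the estimate without integrating.
-/

open Set

theorem norm_sub_le_of_norm_deriv_le_exp {E : Type*} [NormedAddCommGroup E] [NormedSpace ℝ E]
    {f f' : ℝ → E} {C κ t : ℝ} (hκ : κ ≠ 0) (ht : 0 ≤ t)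
    (hf : ∀ s ∈ Icc 0 t, HasDerivAt f (f' s) s)
    (bound : ∀ s ∈ Ico 0 t, ‖f' s‖ ≤ C * Real.exp (κ * s)) :
    ‖f t - f 0‖ ≤ C * (Real.exp (κ * t) - 1) / κ := by
  have hB (s : ℝ) :
      HasDerivAt (fun s => C * (Real.exp (κ * s) - 1) / κ) (C * Real.exp (κ * s)) s := by
    refine ((((hasDerivAt_id s).const_mul κ).exp.sub_const 1).const_mul C
      |>.div_const κ).congr_deriv ?_
    simp only [id, mul_one]
    field_simp
  refine image_norm_le_of_norm_deriv_right_le_deriv_boundary (f := fun s => f s - f 0)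
    (fun s hs => ((hf s hs).sub_const _).continuousAt.continuousWithinAt)
    (fun s hs => ((hf s (Ico_subset_Icc_self hs)).sub_const _).hasDerivWithinAt)
    (by simp) hB bound ⟨ht, le_rfl⟩

section

variable {E F : Type*} [NormedAddCommGroup E] [NormedSpace ℂ E] [NormedAddCommGroup F]
  [NormedSpace ℂ F]

theorem hasDerivAt_cexp_smul_apply_sub {T : ℝ → E →L[ℂ] F} {lam : ℂ} {t s : ℝ} {w v : E}
    (hT : HasDerivAt (fun r => T r w) (T (t - s) v) (t - s)) :
    HasDerivAt (fun s : ℝ => Complex.exp (lam * s) • T (t - s) w)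
      (Complex.exp (lam * s) • T (t - s) (lam • w - v)) s := by
  have hexp :
      HasDerivAt (fun s : ℝ => Complex.exp (lam * s)) (Complex.exp (lam * s) * lam) s := by
    simpa using (((hasDerivAt_id (s : ℂ)).const_mul lam).cexp).comp_ofReal
  have horbit : HasDerivAt (fun s : ℝ => T (t - s) w) (-T (t - s) v) s := by
    simpa [Function.comp_def] using hT.scomp s ((hasDerivAt_id s).const_sub t)
  convert hexp.smul horbit using 1
  · rfl
  rw [map_sub, map_smul, smul_sub, smul_neg, smul_smul, mul_comm, neg_add_eq_sub]

theorem norm_cexp_smul_apply_le_of_opNorm_le {M γ ε : ℝ} {lam : ℂ} {t s : ℝ}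
    {L : E →L[ℂ] F} {v : E}
    (hL : ‖L‖ ≤ M * Real.exp (γ * (t - s))) (hv : ‖v‖ ≤ ε) :
    ‖Complex.exp (lam * s) • L v‖ ≤
      M * ε * Real.exp (γ * t) * Real.exp ((lam.re - γ) * s) := by
  have hexp : Real.exp (γ * t) * Real.exp ((lam.re - γ) * s) =
      Real.exp (lam.re * s) * Real.exp (γ * (t - s)) := by
    rw [← Real.exp_add, ← Real.exp_add]; ring_nf
  calc ‖Complex.exp (lam * s) • L v‖
      = Real.exp (lam.re * s) * ‖L v‖ := by
        rw [norm_smul, Complex.norm_exp]; simp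
    _ ≤ Real.exp (lam.re * s) * (M * Real.exp (γ * (t - s)) * ε) := by
        gcongr
        exact L.le_of_opNorm_le_of_le hL hv
    _ = M * ε * Real.exp (γ * t) * Real.exp ((lam.re - γ) * s) := by
        rw [mul_assoc (M * ε), hexp]; ring

end

theorem semigroup_approximate_eigenvector_bound_general
    {H : Type*} [NormedAddCommGroup H] [InnerProductSpace ℂ H]
    (T : ℝ → H →L[ℂ] H)
    (hT0 : T 0 = 1)
    (M γ : ℝ)
    (hTnorm : ∀ t : ℝ, 0 ≤ t → ‖T t‖ ≤ M * Real.exp (γ * t))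
    (D : Set H) (A : H → H)
    (hgen : ∀ w ∈ D, ∀ t : ℝ, 0 ≤ t → HasDerivAt (fun r => T r w) (T t (A w)) t)
    (ε : ℝ)
    (w : H) (hw : w ∈ D) (lam : ℂ)
    (happrox : ‖A w - lam • w‖ < ε)
    (hne : lam.re ≠ γ) :
    ∀ t : ℝ, 0 ≤ t →
      ‖T t w - Complex.exp (lam * t) • w‖ ≤
        M * ε * (Real.exp (lam.re * t) - Real.exp (γ * t)) / (lam.re - γ) := by
  intro t ht
  have hdefect : ‖lam • w - A w‖ ≤ ε := by rw [norm_sub_rev]; exact happrox.le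
  have hpath := norm_sub_le_of_norm_deriv_le_exp
    (f := fun s : ℝ => Complex.exp (lam * s) • T (t - s) w) (C := M * ε * Real.exp (γ * t))
    (sub_ne_zero.2 hne) ht
    (fun s hs => hasDerivAt_cexp_smul_apply_sub (hgen w hw _ (sub_nonneg.2 hs.2)))
    (fun s hs => norm_cexp_smul_apply_le_of_opNorm_le (hTnorm _ (sub_nonneg.2 hs.2.le)) hdefect)
  have hprimitive : M * ε * Real.exp (γ * t) * (Real.exp ((lam.re - γ) * t) - 1) =
      M * ε * (Real.exp (lam.re * t) - Real.exp (γ * t)) := by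
    rw [mul_sub, mul_one, mul_assoc _ (Real.exp _), ← Real.exp_add]; ring_nf
  rw [norm_sub_rev, ← hprimitive]
  simpa [hT0] using hpath

/-- If `w ∈ Dom(A)`, `λ ∈ ℂ` with `μ = Re(λ) ≠ γ`, and
`‖Aw − λw‖ < ε`, then for all `t ≥ 0`,
`‖T_t w − e^{λt} w‖ ≤ Mε (e^{μt} − e^{γt})/(μ − γ)`. -/
theorem semigroup_approximate_eigenvector_bound
    {H : Type*} [NormedAddCommGroup H] [InnerProductSpace ℂ H] [CompleteSpace H]
    (T : ℝ → H →L[ℂ] H)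
    (hT0 : T 0 = 1)
    (hTadd : ∀ s t : ℝ, 0 ≤ s → 0 ≤ t → T (s + t) = (T s).comp (T t))
    (M γ : ℝ)
    (hTnorm : ∀ t : ℝ, 0 ≤ t → ‖T t‖ ≤ M * Real.exp (γ * t))
    (D : Set H) (A : H → H)
    (hgen : ∀ w ∈ D, ∀ t : ℝ, 0 ≤ t → HasDerivAt (fun r => T r w) (T t (A w)) t)
    (ε : ℝ) (hε0 : 0 < ε)
    (w : H) (hw : w ∈ D) (lam : ℂ)
    (happrox : ‖A w - lam • w‖ < ε)
    (hne : lam.re ≠ γ) :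
    ∀ t : ℝ, 0 ≤ t →
      ‖T t w - Complex.exp (lam * t) • w‖ ≤
        M * ε * (Real.exp (lam.re * t) - Real.exp (γ * t)) / (lam.re - γ) :=
  semigroup_approximate_eigenvector_bound_general T hT0 M γ hTnorm D A hgen ε w hw lam happrox hne
end

section
/- If w ∈ Dom(A), λ ∈ ℂ with Re(λ) ≤ γ, and ‖Aw − λw‖ < ε, then ‖T_t w − e^{λt} w‖ ≤ ε M t e^{γt} for all t ≥ 0. -/
/-!
Variation of constants: for `g r = e^{λ(t-r)} T_r w` the derivative is `e^{λ(t-r)} T_r (Aw - λw)`,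
whose norm is at most `e^{γ(t-r)} · M e^{γr} · ε = ε M e^{γt}`. The mean value inequality on `[0, t]`
then bounds `g t - g 0 = T_t w - e^{λt} w` by `ε M t e^{γt}`.
-/

open Set

theorem Complex.norm_exp_mul_le_real_exp {lam : ℂ} {γ x : ℝ} (hre : lam.re ≤ γ) (hx : 0 ≤ x) :
    ‖Complex.exp (lam * x)‖ ≤ Real.exp (γ * x) := by
  rw [Complex.norm_exp, Complex.re_mul_ofReal]
  exact Real.exp_le_exp.2 (mul_le_mul_of_nonneg_right hre hx)

section

variable {E : Type*} [NormedAddCommGroup E] [NormedSpace ℂ E]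

theorem HasDerivWithinAt.cexp_mul_sub_smul {f : ℝ → E} {f' : E} {s : Set ℝ} {x : ℝ}
    (lam : ℂ) (t : ℝ) (hf : HasDerivWithinAt f f' s x) :
    HasDerivWithinAt (fun r : ℝ => Complex.exp (lam * (t - r)) • f r)
      (Complex.exp (lam * (t - x)) • (f' - lam • f x)) s x := by
  have hexp : HasDerivWithinAt (fun r : ℝ => Complex.exp (lam * (t - r)))
      (Complex.exp (lam * (t - x)) * -lam) s x := by
    have hlin : HasDerivWithinAt (fun r : ℝ => lam * ((t : ℂ) - r)) (-lam) s x := by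
      simpa using ((Complex.ofRealCLM.hasDerivWithinAt (s := s) (x := x)).const_sub
        (t : ℂ)).const_mul lam
    exact hlin.cexp
  exact (hexp.smul hf).congr_deriv (by module)

theorem norm_sub_cexp_smul_le_of_hasDerivWithinAt {f f' : ℝ → E} {lam : ℂ} {γ C t : ℝ}
    (hre : lam.re ≤ γ) (ht : 0 ≤ t)
    (hf : ∀ s ∈ Icc 0 t, HasDerivWithinAt f (f' s) (Icc 0 t) s)
    (hbound : ∀ s ∈ Icc 0 t, ‖f' s - lam • f s‖ ≤ C * Real.exp (γ * s)) :
    ‖f t - Complex.exp (lam * t) • f 0‖ ≤ C * t * Real.exp (γ * t) := by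
  have hderiv_bound : ∀ s ∈ Icc 0 t,
      ‖Complex.exp (lam * (t - s)) • (f' s - lam • f s)‖ ≤ C * Real.exp (γ * t) := by
    intro s hs
    have hexp : ‖Complex.exp (lam * (t - s))‖ ≤ Real.exp (γ * (t - s)) := by
      exact_mod_cast Complex.norm_exp_mul_le_real_exp hre (sub_nonneg.2 hs.2)
    calc ‖Complex.exp (lam * (t - s)) • (f' s - lam • f s)‖
        ≤ Real.exp (γ * (t - s)) * (C * Real.exp (γ * s)) := by
          rw [norm_smul]
          exact mul_le_mul hexp (hbound s hs) (norm_nonneg _) (Real.exp_nonneg _)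
      _ = C * Real.exp (γ * t) := by
          rw [mul_left_comm, ← Real.exp_add]
          ring_nf
  have hmvt := (convex_Icc 0 t).norm_image_sub_le_of_norm_hasDerivWithin_le
    (fun s hs => (hf s hs).cexp_mul_sub_smul lam t) hderiv_bound
    (left_mem_Icc.2 ht) (right_mem_Icc.2 ht)
  simpa [Real.norm_of_nonneg ht, mul_right_comm] using hmvt

end

theorem semigroup_approximate_eigenvector_linear_bound_general
    {H : Type*} [NormedAddCommGroup H] [InnerProductSpace ℂ H]
    (T : ℝ → H →L[ℂ] H)
    (hT0 : T 0 = 1)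
    (M γ : ℝ)
    (hTnorm : ∀ t : ℝ, 0 ≤ t → ‖T t‖ ≤ M * Real.exp (γ * t))
    (D : Set H) (A : H → H)
    (hgen : ∀ w ∈ D, ∀ t : ℝ, 0 ≤ t → HasDerivAt (fun r => T r w) (T t (A w)) t)
    (ε : ℝ)
    (w : H) (hw : w ∈ D) (lam : ℂ)
    (happrox : ‖A w - lam • w‖ < ε)
    (hre : lam.re ≤ γ) :
    ∀ t : ℝ, 0 ≤ t →
      ‖T t w - Complex.exp (lam * t) • w‖ ≤ ε * M * t * Real.exp (γ * t) := by
  intro t ht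
  have horbit_bound : ∀ s ∈ Icc 0 t, ‖T s (A w) - lam • T s w‖ ≤ ε * M * Real.exp (γ * s) := by
    intro s hs
    calc ‖T s (A w) - lam • T s w‖ = ‖T s (A w - lam • w)‖ := by rw [map_sub, map_smul]
      _ ≤ ‖T s‖ * ‖A w - lam • w‖ := (T s).le_opNorm _
      _ ≤ M * Real.exp (γ * s) * ε := by
          have hTs := hTnorm s hs.1
          exact mul_le_mul hTs happrox.le (norm_nonneg _) ((norm_nonneg _).trans hTs)
      _ = ε * M * Real.exp (γ * s) := by ring
  simpa [hT0] using norm_sub_cexp_smul_le_of_hasDerivWithinAt hre ht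
    (fun s hs => (hgen w hw s hs.1).hasDerivWithinAt) horbit_bound

/-- If `w ∈ Dom(A)`, `λ ∈ ℂ` with `Re(λ) ≤ γ`, and `‖Aw − λw‖ < ε`,
then `‖T_t w − e^{λt} w‖ ≤ ε M t e^{γt}` for all `t ≥ 0`. -/
theorem semigroup_approximate_eigenvector_linear_bound
    {H : Type*} [NormedAddCommGroup H] [InnerProductSpace ℂ H] [CompleteSpace H]
    (T : ℝ → H →L[ℂ] H)
    (hT0 : T 0 = 1)
    (hTadd : ∀ s t : ℝ, 0 ≤ s → 0 ≤ t → T (s + t) = (T s).comp (T t))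
    (M γ : ℝ)
    (hTnorm : ∀ t : ℝ, 0 ≤ t → ‖T t‖ ≤ M * Real.exp (γ * t))
    (D : Set H) (A : H → H)
    (hgen : ∀ w ∈ D, ∀ t : ℝ, 0 ≤ t → HasDerivAt (fun r => T r w) (T t (A w)) t)
    (ε : ℝ) (hε0 : 0 < ε)
    (w : H) (hw : w ∈ D) (lam : ℂ)
    (happrox : ‖A w - lam • w‖ < ε)
    (hre : lam.re ≤ γ) :
    ∀ t : ℝ, 0 ≤ t →
      ‖T t w - Complex.exp (lam * t) • w‖ ≤ ε * M * t * Real.exp (γ * t) :=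
  semigroup_approximate_eigenvector_linear_bound_general T hT0 M γ hTnorm D A hgen ε w hw lam
    happrox hre
end

section
/- The operators R_t = G e^{λt} B^{-1} G*, where (e^{λt}φ)(s) = e^{λ_s t} φ(s), satisfy R_0 = P, R_t(L^⊥) = 0, R_t(L) ⊆ L, and R_t R_u f = R_{t+u} f for all t, u ≥ 0 and f ∈ M = L + L^⊥. -/
/-!
On `range G` the operator `R_t = G e^{λt} B⁻¹ G*` acts by `G φ ↦ G (e^{λt} φ)`, because
`B⁻¹ G* G = 1`, and it vanishes on `(range G)ᗮ = ker G*`. All four claims are linear in `f`, so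
they reduce to these two pieces of `M`, where they follow from `e^{λ0} = 1`,
`e^{λt} e^{λu} = e^{λ(t+u)}` and `(range G)ᗮ = (closure (range G))ᗮ`.
-/

open MeasureTheory
open scoped InnerProduct ENNReal

section ExpMultiplier

variable {S : Type*} [MeasurableSpace S] {μ : Measure S} {p : ℝ≥0∞} [Fact (1 ≤ p)]

def IsExpMultiplier (Λ : S → ℂ) (E : ℝ → Lp ℂ p μ →L[ℂ] Lp ℂ p μ) : Prop :=
  ∀ t φ, (E t φ : S → ℂ) =ᵐ[μ] fun s => Complex.exp (Λ s * t) * (φ : S → ℂ) s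

variable {Λ : S → ℂ} {E : ℝ → Lp ℂ p μ →L[ℂ] Lp ℂ p μ}

theorem IsExpMultiplier.zero (hE : IsExpMultiplier Λ E) : E 0 = 1 := by
  ext1 φ
  apply Lp.ext
  filter_upwards [hE 0 φ] with s hs
  simpa using hs

theorem IsExpMultiplier.add (hE : IsExpMultiplier Λ E) (t u : ℝ) : E (t + u) = E t ∘L E u := by
  ext1 φ
  apply Lp.ext
  filter_upwards [hE (t + u) φ, hE t (E u φ), hE u φ] with s hsum ht hu
  rw [ContinuousLinearMap.comp_apply, hsum, ht, hu, ← mul_assoc, ← Complex.exp_add]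
  push_cast
  ring_nf

end ExpMultiplier

section ApproxSemigroup

open ContinuousLinearMap

variable {V H : Type*} [NormedAddCommGroup V] [InnerProductSpace ℂ V] [CompleteSpace V]
  [NormedAddCommGroup H] [InnerProductSpace ℂ H] [CompleteSpace H]

noncomputable def approxSemigroup (G : V →L[ℂ] H) (Binv : V →L[ℂ] V) (E : ℝ → V →L[ℂ] V)
    (t : ℝ) : H →L[ℂ] H :=
  G ∘L E t ∘L Binv ∘L G†

variable (G : V →L[ℂ] H) (Binv : V →L[ℂ] V) (E : ℝ → V →L[ℂ] V)

theorem approxSemigroup_apply_of_mem_orthogonal (t : ℝ) {f : H} (hf : f ∈ G.rangeᗮ) :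
    approxSemigroup G Binv E t f = 0 := by
  rw [orthogonal_range, LinearMap.mem_ker, coe_coe] at hf
  simp [approxSemigroup, hf]

theorem approxSemigroup_apply_mem_range (t : ℝ) (f : H) :
    approxSemigroup G Binv E t f ∈ G.range :=
  ⟨_, rfl⟩

variable {G Binv E} (hB : ∀ φ, Binv ((G†) (G φ)) = φ)
include hB

theorem approxSemigroup_apply_apply (t : ℝ) (φ : V) :
    approxSemigroup G Binv E t (G φ) = G (E t φ) := by
  simp [approxSemigroup, hB]

theorem approxSemigroup_zero_eqOn (hE : E 0 = 1) {K : Submodule ℂ H} [K.HasOrthogonalProjection]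
    (hK : K = G.range.topologicalClosure) :
    Set.EqOn (approxSemigroup G Binv E 0) K.starProjection
      ((G.range ⊔ G.rangeᗮ : Submodule ℂ H) : Set H) := by
  refine LinearMap.eqOn_sup ?_ fun f hf => ?_
  · rintro _ ⟨φ, rfl⟩
    have hφK : G φ ∈ K := hK ▸ Submodule.le_topologicalClosure _ ⟨φ, rfl⟩
    rw [coe_coe, approxSemigroup_apply_apply hB, hE, one_apply_eq_self,
      Submodule.starProjection_eq_self_iff.mpr hφK]
  · have hfK : f ∈ Kᗮ := by rwa [hK, Submodule.orthogonal_closure]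
    rw [approxSemigroup_apply_of_mem_orthogonal G Binv E 0 hf,
      K.starProjection_apply_eq_zero_iff.mpr hfK]

theorem approxSemigroup_comp_eqOn (hE : ∀ t u, E (t + u) = E t ∘L E u) (t u : ℝ) :
    Set.EqOn (approxSemigroup G Binv E t ∘L approxSemigroup G Binv E u)
      (approxSemigroup G Binv E (t + u)) ((G.range ⊔ G.rangeᗮ : Submodule ℂ H) : Set H) := by
  refine LinearMap.eqOn_sup ?_ fun f hf => ?_
  · rintro _ ⟨φ, rfl⟩
    simp [approxSemigroup_apply_apply hB, hE]
  · simp [approxSemigroup_apply_of_mem_orthogonal G Binv E _ hf]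

end ApproxSemigroup

theorem approximating_semigroup_properties_general
    {H : Type*} [NormedAddCommGroup H] [InnerProductSpace ℂ H] [CompleteSpace H]
    {S : Type*} [MeasurableSpace S] {μ : Measure S}
    (Λ : S → ℂ)
    (G : Lp ℂ 2 μ →L[ℂ] H)
    (Binv : Lp ℂ 2 μ →L[ℂ] Lp ℂ 2 μ)
    (hB1 : ∀ φ, Binv ((ContinuousLinearMap.adjoint G) (G φ)) = φ)
    (E : ℝ → Lp ℂ 2 μ →L[ℂ] Lp ℂ 2 μ)
    (hE : ∀ t : ℝ, ∀ φ : Lp ℂ 2 μ,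
      (E t φ : S → ℂ) =ᵐ[μ] fun s => Complex.exp (Λ s * t) * (φ : S → ℂ) s)
    (R : ℝ → H → H)
    (hR : ∀ t f, R t f = G (E t (Binv ((ContinuousLinearMap.adjoint G) f))))
    (L : Submodule ℂ H) (hL : L = LinearMap.range G.toLinearMap)
    (K : Submodule ℂ H) (hK : K = L.topologicalClosure) [CompleteSpace K] :
    (∀ f ∈ L ⊔ Lᗮ, R 0 f = (K.orthogonalProjection f : H)) ∧
    (∀ t : ℝ, 0 ≤ t → ∀ f ∈ Lᗮ, R t f = 0) ∧
    (∀ t : ℝ, 0 ≤ t → ∀ f ∈ L, R t f ∈ L) ∧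
    (∀ t u' : ℝ, 0 ≤ t → 0 ≤ u' → ∀ f ∈ L ⊔ Lᗮ, R t (R u' f) = R (t + u') f) := by
  obtain rfl : R = fun t => ⇑(approxSemigroup G Binv E t) := funext fun t => funext (hR t)
  subst hL
  have hE' : IsExpMultiplier Λ E := hE
  exact ⟨fun f hf => approxSemigroup_zero_eqOn hB1 hE'.zero hK hf,
    fun t _ f hf => approxSemigroup_apply_of_mem_orthogonal G Binv E t hf,
    fun t _ f _ => approxSemigroup_apply_mem_range G Binv E t f,
    fun t u _ _ f hf => approxSemigroup_comp_eqOn hB1 hE'.add t u hf⟩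

/-- The operators `R_t = G e^{λt} B⁻¹ G*`, where `e^{λt}` is
multiplication by `e^{λ_s t}` on `L²(S)`, satisfy `R_0 = P`, `R_t(L^⊥) = 0`,
`R_t(L) ⊆ L`, and `R_t R_u f = R_{t+u} f` for all `t, u ≥ 0` and `f ∈ M = L + L^⊥`. -/
theorem approximating_semigroup_properties
    {H : Type*} [NormedAddCommGroup H] [InnerProductSpace ℂ H] [CompleteSpace H]
    {S : Type*} [MeasurableSpace S] {μ : Measure S} [IsFiniteMeasure μ]
    (u : S → H) (hu : ∀ s, ‖u s‖ = 1) (Λ : S → ℂ)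
    (G : Lp ℂ 2 μ →L[ℂ] H)
    (hG : ∀ φ : Lp ℂ 2 μ, G φ = ∫ s, (φ : S → ℂ) s • u s ∂μ)
    (Binv : Lp ℂ 2 μ →L[ℂ] Lp ℂ 2 μ)
    (hB1 : ∀ φ, Binv ((ContinuousLinearMap.adjoint G) (G φ)) = φ)
    (hB2 : ∀ φ, (ContinuousLinearMap.adjoint G) (G (Binv φ)) = φ)
    (E : ℝ → Lp ℂ 2 μ →L[ℂ] Lp ℂ 2 μ)
    (hE : ∀ t : ℝ, ∀ φ : Lp ℂ 2 μ,
      (E t φ : S → ℂ) =ᵐ[μ] fun s => Complex.exp (Λ s * t) * (φ : S → ℂ) s)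
    (R : ℝ → H → H)
    (hR : ∀ t f, R t f = G (E t (Binv ((ContinuousLinearMap.adjoint G) f))))
    (L : Submodule ℂ H) (hL : L = LinearMap.range G.toLinearMap)
    (K : Submodule ℂ H) (hK : K = L.topologicalClosure) [CompleteSpace K] :
    (∀ f ∈ L ⊔ Lᗮ, R 0 f = (K.orthogonalProjection f : H)) ∧
    (∀ t : ℝ, 0 ≤ t → ∀ f ∈ Lᗮ, R t f = 0) ∧
    (∀ t : ℝ, 0 ≤ t → ∀ f ∈ L, R t f ∈ L) ∧
    (∀ t u' : ℝ, 0 ≤ t → 0 ≤ u' → ∀ f ∈ L ⊔ Lᗮ, R t (R u' f) = R (t + u') f) :=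
  approximating_semigroup_properties_general Λ G Binv hB1 E hE R hR L hL K hK
end

section
/- For f ∈ M, the approximate solution satisfies ‖R_t f‖ ≤ ‖B^{-1}G* f‖_1 · e^{μt}, where μ = sup{Re(λ_s) : s ∈ S}. -/
open MeasureTheory

/-! Since the `u s` are unit vectors, `‖G φ‖ ≤ ‖φ‖₁`; and `e^{λt}` acts on `L²(S)` by multiplication
with functions of modulus `e^{Re(λ_s) t} ≤ e^{μt}` for `t ≥ 0`, so `‖e^{λt} φ‖₁ ≤ e^{μt} ‖φ‖₁`.
Apply both to `φ = B⁻¹ G* f`, which is integrable because `μ` is finite. -/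

theorem Complex.norm_exp_mul_ofReal_le {z : ℂ} {M t : ℝ} (hz : z.re ≤ M) (ht : 0 ≤ t) :
    ‖Complex.exp (z * t)‖ ≤ Real.exp (M * t) := by
  rw [Complex.norm_exp, Complex.re_mul_ofReal]
  exact Real.exp_le_exp.2 (mul_le_mul_of_nonneg_right hz ht)

section

variable {S : Type*} [MeasurableSpace S] {μ : Measure S}

theorem norm_integral_smul_unit_le {E : Type*} [NormedAddCommGroup E] [NormedSpace ℂ E]
    (g : S → ℂ) {u : S → E} (hu : ∀ s, ‖u s‖ = 1) :
    ‖∫ s, g s • u s ∂μ‖ ≤ ∫ s, ‖g s‖ ∂μ := by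
  simpa only [norm_smul, hu, mul_one] using norm_integral_le_integral_norm (fun s => g s • u s)

theorem integral_norm_exp_mul_le {Λ : S → ℂ} {M t : ℝ} (hΛ : ∀ s, (Λ s).re ≤ M) (ht : 0 ≤ t)
    {φ ψ : S → ℂ} (hφ : Integrable φ μ)
    (hψ : ψ =ᵐ[μ] fun s => Complex.exp (Λ s * t) * φ s) :
    ∫ s, ‖ψ s‖ ∂μ ≤ (∫ s, ‖φ s‖ ∂μ) * Real.exp (M * t) := by
  rw [← integral_mul_const]
  refine integral_mono_of_nonneg (.of_forall fun s => norm_nonneg (ψ s))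
    (hφ.norm.mul_const (Real.exp (M * t))) ?_
  filter_upwards [hψ] with s hs
  rw [hs, norm_mul, mul_comm ‖φ s‖]
  exact mul_le_mul_of_nonneg_right (Complex.norm_exp_mul_ofReal_le (hΛ s) ht) (norm_nonneg _)

end

theorem approximating_semigroup_norm_bound_general
    {H : Type*} [NormedAddCommGroup H] [InnerProductSpace ℂ H] [CompleteSpace H]
    {S : Type*} [MeasurableSpace S] {μ : Measure S} [IsFiniteMeasure μ]
    (u : S → H) (hu : ∀ s, ‖u s‖ = 1)
    (Λ : S → ℂ) (hbdd : BddAbove (Set.range fun s => (Λ s).re))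
    (G : Lp ℂ 2 μ →L[ℂ] H)
    (hG : ∀ φ : Lp ℂ 2 μ, G φ = ∫ s, (φ : S → ℂ) s • u s ∂μ)
    (Binv : Lp ℂ 2 μ →L[ℂ] Lp ℂ 2 μ)
    (E : ℝ → Lp ℂ 2 μ →L[ℂ] Lp ℂ 2 μ)
    (hE : ∀ t : ℝ, ∀ φ : Lp ℂ 2 μ,
      (E t φ : S → ℂ) =ᵐ[μ] fun s => Complex.exp (Λ s * t) * (φ : S → ℂ) s)
    (R : ℝ → H → H)
    (hR : ∀ t f, R t f = G (E t (Binv ((ContinuousLinearMap.adjoint G) f))))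
    (f : H)
    (t : ℝ) (ht : 0 ≤ t) :
    ‖R t f‖ ≤
      (∫ s, ‖(Binv ((ContinuousLinearMap.adjoint G) f) : S → ℂ) s‖ ∂μ) *
        Real.exp ((⨆ s, (Λ s).re) * t) := by
  set φ := Binv ((ContinuousLinearMap.adjoint G) f)
  rw [hR, hG]
  calc ‖∫ s, (E t φ : S → ℂ) s • u s ∂μ‖
      ≤ ∫ s, ‖(E t φ : S → ℂ) s‖ ∂μ := norm_integral_smul_unit_le _ hu
    _ ≤ (∫ s, ‖(φ : S → ℂ) s‖ ∂μ) * Real.exp ((⨆ s, (Λ s).re) * t) :=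
        integral_norm_exp_mul_le (le_ciSup hbdd) ht ((Lp.memLp φ).integrable one_le_two)
          (hE t φ)

/-- For `f ∈ M`, the approximate solution satisfies
`‖R_t f‖ ≤ ‖B⁻¹ G* f‖₁ · e^{μt}`, where `μ = sup{Re(λ_s) : s ∈ S}`. -/
theorem approximating_semigroup_norm_bound
    {H : Type*} [NormedAddCommGroup H] [InnerProductSpace ℂ H] [CompleteSpace H]
    {S : Type*} [MeasurableSpace S] [Nonempty S] {μ : Measure S} [IsFiniteMeasure μ]
    (u : S → H) (hu : ∀ s, ‖u s‖ = 1)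
    (Λ : S → ℂ) (hbdd : BddAbove (Set.range fun s => (Λ s).re))
    (G : Lp ℂ 2 μ →L[ℂ] H)
    (hG : ∀ φ : Lp ℂ 2 μ, G φ = ∫ s, (φ : S → ℂ) s • u s ∂μ)
    (Binv : Lp ℂ 2 μ →L[ℂ] Lp ℂ 2 μ)
    (hB1 : ∀ φ, Binv ((ContinuousLinearMap.adjoint G) (G φ)) = φ)
    (hB2 : ∀ φ, (ContinuousLinearMap.adjoint G) (G (Binv φ)) = φ)
    (E : ℝ → Lp ℂ 2 μ →L[ℂ] Lp ℂ 2 μ)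
    (hE : ∀ t : ℝ, ∀ φ : Lp ℂ 2 μ,
      (E t φ : S → ℂ) =ᵐ[μ] fun s => Complex.exp (Λ s * t) * (φ : S → ℂ) s)
    (R : ℝ → H → H)
    (hR : ∀ t f, R t f = G (E t (Binv ((ContinuousLinearMap.adjoint G) f))))
    (f : H)
    (hf : f ∈ LinearMap.range G.toLinearMap ⊔ (LinearMap.range G.toLinearMap)ᗮ)
    (t : ℝ) (ht : 0 ≤ t) :
    ‖R t f‖ ≤
      (∫ s, ‖(Binv ((ContinuousLinearMap.adjoint G) f) : S → ℂ) s‖ ∂μ) *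
        Real.exp ((⨆ s, (Λ s).re) * t) :=
  approximating_semigroup_norm_bound_general u hu Λ hbdd G hG Binv E hE R hR f t ht
end

section
/- With u_s, v, w_s as above, λ_s = −c/a + 2πis/a, and A = d/dx on L^2(0,a) with f(a) = 0, one has ‖A w_s − λ_s w_s‖^2 ≤ (ak^2 / (2cα^2)) e^{−2c(1−α/a)}; consequently inf over w ∈ Dom(A) of ‖u_s − w‖ + ‖Aw − λ_s w‖ is O(e^{−c(1−α/a)}) as c → ∞. -/
/-!
On `(0, a)` the mode has `‖u_s(x)‖² = k² e^{-2cx/a}`. Both `u_s − w_s = u_s (1 − v)` and the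
residual `u_s v′` vanish for `x ≤ a − α`, and beyond that point they are `u_s` times a factor of
modulus at most `1` resp. `1/α`. So both squared norms are dominated by the exponential tail
`∫_{a−α}^∞ k² e^{-2cx/a} dx = (a k²/2c) e^{-2c(1−α/a)}`, and the normalisation
`k² a/2c = (1 − e^{-2c})⁻¹ ≤ 2` for `c ≥ 1` makes the constant uniform in `c`.
-/

open MeasureTheory Set Real

theorem setIntegral_le_of_le_exp_decay_tail {s : Set ℝ} {f : ℝ → ℝ} {t b K : ℝ}
    (hb : 0 < b) (hK : 0 ≤ K) (hf_nonneg : ∀ x ∈ s, 0 ≤ f x)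
    (hf_zero : ∀ x ∈ s, x ≤ t → f x = 0)
    (hf_le : ∀ x ∈ s, t < x → f x ≤ K * exp (-b * x)) :
    ∫ x in s, f x ≤ K / b * exp (-b * t) := by
  set g : ℝ → ℝ := (Ioi t).indicator fun x => K * exp (-b * x)
  have hg_int : Integrable g := (integrable_indicator_iff measurableSet_Ioi).2 <|
    (integrableOn_exp_mul_Ioi (neg_lt_zero.2 hb) t).const_mul K
  have hf_le_g : ∀ x ∈ s, f x ≤ g x := by
    intro x hx
    by_cases hxt : t < x
    · simpa [g, hxt] using hf_le x hx hxt
    · simp [g, hxt, hf_zero x hx (not_lt.1 hxt)]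
  calc ∫ x in s, f x ≤ ∫ x in s, g x :=
        setIntegral_mono_of_nonneg hf_nonneg hf_le_g hg_int.integrableOn
    _ ≤ ∫ x, g x := setIntegral_le_integral hg_int <| .of_forall fun x =>
        indicator_nonneg (fun _ _ => by positivity) x
    _ = K / b * exp (-b * t) := by
        rw [integral_indicator measurableSet_Ioi, integral_const_mul,
          integral_exp_mul_Ioi (neg_lt_zero.2 hb)]
        field_simp

theorem setIntegral_norm_mul_ofReal_sq_le {s : Set ℝ} {g : ℝ → ℂ} {φ : ℝ → ℝ}
    {t b K M : ℝ} (hb : 0 < b) (hK : 0 ≤ K) (hM : 0 ≤ M)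
    (hg : ∀ x ∈ s, t < x → ‖g x‖ ^ 2 ≤ K * exp (-b * x))
    (hφ_zero : ∀ x ∈ s, x ≤ t → φ x = 0) (hφ_le : ∀ x ∈ s, t < x → φ x ^ 2 ≤ M) :
    ∫ x in s, ‖g x * φ x‖ ^ 2 ≤ M * (K / b) * exp (-b * t) := by
  have h := setIntegral_le_of_le_exp_decay_tail (f := fun x => ‖g x * φ x‖ ^ 2) (s := s)
    hb (mul_nonneg hM hK) (fun x _ => by positivity)
    (fun x hx hxt => by simp [hφ_zero x hx hxt])
    fun x hx hxt => by
      rw [norm_mul, mul_pow, Complex.norm_real, norm_eq_abs, sq_abs]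
      calc ‖g x‖ ^ 2 * φ x ^ 2 ≤ K * exp (-b * x) * M :=
            mul_le_mul (hg x hx hxt) (hφ_le x hx hxt) (sq_nonneg _) (by positivity)
        _ = M * K * exp (-b * x) := by ring
  rwa [mul_div_assoc] at h

theorem norm_sq_ofReal_mul_exp_decay_mode (a c K x : ℝ) (s : ℤ) :
    ‖(K : ℂ) * Complex.exp (((-(c * x / a) : ℝ) : ℂ) +
        2 * (π : ℂ) * Complex.I * (s : ℂ) * (x : ℂ) / (a : ℂ))‖ ^ 2 =
      K ^ 2 * exp (-(2 * c / a) * x) := by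
  have hphase :
      2 * (π : ℂ) * Complex.I * s * x / a = ((2 * π * s * x / a : ℝ) : ℂ) * Complex.I := by
    push_cast; ring
  rw [hphase, Complex.exp_add, norm_mul, norm_mul, Complex.norm_real, Complex.norm_exp_ofReal,
    Complex.norm_exp_ofReal_mul_I, mul_one, mul_pow, norm_eq_abs, sq_abs, ← exp_nat_mul]
  congr 2
  ring

theorem inv_sqrt_mul_one_sub_exp_sq_mul_le_two {L c : ℝ} (hL : 0 < L) (hc : 1 ≤ c) :
    (√(L * (1 - exp (-2 * c))))⁻¹ ^ 2 * L ≤ 2 := by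
  have hexp : exp (-2 * c) < 1 / 2 := by
    rw [neg_mul, exp_neg, one_div]
    exact inv_strictAnti₀ (by norm_num)
      (by linarith [add_one_lt_exp (x := 2 * c) (by positivity)])
  rw [inv_pow, sq_sqrt (by nlinarith), mul_inv, mul_comm L⁻¹, mul_assoc,
    inv_mul_cancel₀ hL.ne', mul_one, inv_le_comm₀ (by linarith) (by norm_num)]
  linarith

theorem sq_one_sub_ramp_le_one {a α x : ℝ} (hα : 0 < α) (hxa : x < a) (hx : a - α < x) :
    (1 - (a - x) / α) ^ 2 ≤ 1 := by
  have h0 : 0 ≤ 1 - (a - x) / α := by rw [sub_nonneg, div_le_one hα]; linarith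
  have h1 : 1 - (a - x) / α ≤ 1 := by linarith [div_nonneg (sub_nonneg.2 hxa.le) hα.le]
  nlinarith

theorem sqrt_le_sqrt_mul_of_le_mul_sq {I M X : ℝ} (hX : 0 ≤ X) (h : I ≤ M * X ^ 2) :
    √I ≤ √M * X := by
  rw [← sqrt_sq hX, ← sqrt_mul' M (sq_nonneg X)]
  exact sqrt_le_sqrt h

theorem convection_approximate_eigenvalue_error_general
    (a α : ℝ) (ha : 0 < a) (hα0 : 0 < α) (s : ℤ)
    (k : ℝ → ℝ)
    (hk : ∀ c : ℝ, k c = (Real.sqrt ((a / (2 * c)) * (1 - Real.exp (-2 * c))))⁻¹)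
    (u : ℝ → ℝ → ℂ)
    (hu : ∀ c : ℝ, u c = fun x : ℝ => (k c : ℂ) *
      Complex.exp (((-(c * x / a) : ℝ) : ℂ) +
        2 * (Real.pi : ℂ) * Complex.I * (s : ℂ) * (x : ℂ) / (a : ℂ)))
    (v : ℝ → ℝ) (hv : v = fun x : ℝ => if x ≤ a - α then 1 else (a - x) / α)
    (vd : ℝ → ℝ) (hvd : vd = fun x : ℝ => if x ≤ a - α then 0 else -1 / α)
    (w : ℝ → ℝ → ℂ) (hw : ∀ c : ℝ, w c = fun x : ℝ => u c x * (v x : ℂ)) :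
    (∀ c : ℝ, 0 < c →
      (∫ x in Set.Ioo (0 : ℝ) a, ‖u c x * (vd x : ℂ)‖ ^ 2) ≤
        a * (k c) ^ 2 / (2 * c * α ^ 2) * Real.exp (-(2 * c) * (1 - α / a))) ∧
    (∃ C : ℝ, 0 < C ∧ ∀ᶠ c in Filter.atTop,
      Real.sqrt (∫ x in Set.Ioo (0 : ℝ) a, ‖u c x - w c x‖ ^ 2) +
        Real.sqrt (∫ x in Set.Ioo (0 : ℝ) a, ‖u c x * (vd x : ℂ)‖ ^ 2) ≤
          C * Real.exp (-(c * (1 - α / a)))) := by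
  have hu_sq (c x : ℝ) : ‖u c x‖ ^ 2 = k c ^ 2 * exp (-(2 * c / a) * x) := by
    rw [hu]; exact norm_sq_ofReal_mul_exp_decay_mode a c _ x s
  have hresidual (c : ℝ) (hc : 0 < c) : ∫ x in Ioo 0 a, ‖u c x * (vd x : ℂ)‖ ^ 2 ≤
      (α ^ 2)⁻¹ * (k c ^ 2 / (2 * c / a)) * exp (-(2 * c / a) * (a - α)) :=
    setIntegral_norm_mul_ofReal_sq_le (by positivity) (sq_nonneg _) (by positivity)
      (fun x _ _ => (hu_sq c x).le) (fun x _ hx => by simp [hvd, hx])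
      fun x _ hx => by simp [hvd, not_le.2 hx, div_pow]
  have hdefect (c : ℝ) (hc : 0 < c) : ∫ x in Ioo 0 a, ‖u c x - w c x‖ ^ 2 ≤
      1 * (k c ^ 2 / (2 * c / a)) * exp (-(2 * c / a) * (a - α)) := by
    simp_rw [hw, ← mul_one_sub, ← Complex.ofReal_one, ← Complex.ofReal_sub]
    exact setIntegral_norm_mul_ofReal_sq_le (by positivity) (sq_nonneg _) zero_le_one
      (fun x _ _ => (hu_sq c x).le) (fun x _ hx => by simp [hv, hx])
      fun x hx hxt => by simpa [hv, not_le.2 hxt] using sq_one_sub_ramp_le_one hα0 hx.2 hxt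
  have hexponent (c : ℝ) : -(2 * c / a) * (a - α) = -(2 * c) * (1 - α / a) := by field_simp
  refine ⟨fun c hc => (hresidual c hc).trans_eq ?_, √2 + √((α ^ 2)⁻¹ * 2), by positivity,
    ?_⟩
  · rw [hexponent]; field_simp
  filter_upwards [Filter.eventually_ge_atTop 1] with c hc
  have hk_sq : k c ^ 2 / (2 * c / a) ≤ 2 := by
    rw [hk, div_eq_mul_one_div, one_div_div]
    exact inv_sqrt_mul_one_sub_exp_sq_mul_le_two (by positivity) hc
  have hexp_sq : exp (-(2 * c / a) * (a - α)) = exp (-(c * (1 - α / a))) ^ 2 := by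
    rw [hexponent, ← exp_nat_mul]; ring_nf
  rw [add_mul]
  gcongr
  · exact sqrt_le_sqrt_mul_of_le_mul_sq (exp_pos _).le <|
      (hdefect c (by linarith)).trans (by rw [hexp_sq]; gcongr; linarith)
  · exact sqrt_le_sqrt_mul_of_le_mul_sq (exp_pos _).le <|
      (hresidual c (by linarith)).trans (by rw [hexp_sq]; gcongr)

/-- With `u_s, v, w_s` as in Statement 13 and
`λ_s = −c/a + 2πis/a`, so that `A w_s − λ_s w_s = u_s v′`, one has
`‖A w_s − λ_s w_s‖² ≤ (ak²/(2cα²)) e^{−2c(1−α/a)}`; consequently (taking `w = w_s`)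
`inf_{w ∈ Dom A} (‖u_s − w‖ + ‖Aw − λ_s w‖)` is `O(e^{−c(1−α/a)})` as `c → ∞`. -/
theorem convection_approximate_eigenvalue_error
    (a α : ℝ) (ha : 0 < a) (hα0 : 0 < α) (hαa : α < a) (s : ℤ)
    (k : ℝ → ℝ)
    (hk : ∀ c : ℝ, k c = (Real.sqrt ((a / (2 * c)) * (1 - Real.exp (-2 * c))))⁻¹)
    (u : ℝ → ℝ → ℂ)
    (hu : ∀ c : ℝ, u c = fun x : ℝ => (k c : ℂ) *
      Complex.exp (((-(c * x / a) : ℝ) : ℂ) +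
        2 * (Real.pi : ℂ) * Complex.I * (s : ℂ) * (x : ℂ) / (a : ℂ)))
    (v : ℝ → ℝ) (hv : v = fun x : ℝ => if x ≤ a - α then 1 else (a - x) / α)
    (vd : ℝ → ℝ) (hvd : vd = fun x : ℝ => if x ≤ a - α then 0 else -1 / α)
    (w : ℝ → ℝ → ℂ) (hw : ∀ c : ℝ, w c = fun x : ℝ => u c x * (v x : ℂ)) :
    (∀ c : ℝ, 0 < c →
      (∫ x in Set.Ioo (0 : ℝ) a, ‖u c x * (vd x : ℂ)‖ ^ 2) ≤
        a * (k c) ^ 2 / (2 * c * α ^ 2) * Real.exp (-(2 * c) * (1 - α / a))) ∧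
    (∃ C : ℝ, 0 < C ∧ ∀ᶠ c in Filter.atTop,
      Real.sqrt (∫ x in Set.Ioo (0 : ℝ) a, ‖u c x - w c x‖ ^ 2) +
        Real.sqrt (∫ x in Set.Ioo (0 : ℝ) a, ‖u c x * (vd x : ℂ)‖ ^ 2) ≤
          C * Real.exp (-(c * (1 - α / a)))) :=
  convection_approximate_eigenvalue_error_general a α ha hα0 s k hk u hu v hv vd hvd w hw
end

section
/- Let δ = 1/2 − c/(ab) with 0 < c < ab/2, u_σ(x) = k(e^{(−b/2+bδ+iσ)x} − e^{(−b/2−bδ−iσ)x}) normalized in L^2(0,a), w_σ = u_σ v with v(x) = 1 − e^{(x−a)/α}, and μ_σ = b^{−1}(−b/2+bδ+iσ)² + (−b/2+bδ+iσ). Then there exists a constant K depending on α, b, σ such that ‖u_σ − w_σ‖ + ‖Aw_σ − μ_σ w_σ‖ ≤ K a^{−1/2} (2c/(e^{2c} − 1))^{1/2} for all sufficiently large a. -/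
/-!
The given `δ` turns the two exponents into `p = -c/a + iσ` and `q = -(b - c/a) - iσ`, both with
nonpositive real part, so on `x ≥ 0` the function `u = k (e^{px} - e^{qx})` and its derivative are
bounded by `2|k|` and `|k| (‖p‖ + ‖q‖)`. Both error terms carry the factor `e^{(x-a)/α}`
(`u - u v = u e^{(x-a)/α}`, and `v'`, `v''` are multiples of it), whose square integrates to at
most `α/2` over `(0, a)`; hence both `L²` norms are `O(|k|)` uniformly in `a`.
The normalisation controls `k`: `|e^{px} - e^{qx}|² ≥ e^{2 Re p x} - 2 e^{Re q x}` gives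
`∫₀^a |u/k|² ≥ a (1 - e^{-2c}) / (2c) - 4/b`, so for large `a`,
`k² ≤ 4c / (a (1 - e^{-2c})) = 2 e^{2c} a⁻¹ · 2c / (e^{2c} - 1)`.
-/

open MeasureTheory Set Filter
open scoped Real Complex

lemma integral_Ioo_exp_mul {r : ℝ} (hr : r ≠ 0) {a : ℝ} (ha : 0 ≤ a) :
    ∫ x in Ioo 0 a, rexp (r * x) = (rexp (r * a) - 1) / r := by
  rw [← integral_Ioc_eq_integral_Ioo, ← intervalIntegral.integral_of_le ha,
    intervalIntegral.integral_comp_mul_left (fun x => rexp x) hr, integral_exp]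
  simp [div_eq_inv_mul]

lemma integral_Ioo_exp_sub_div_sq_le {a α : ℝ} (ha : 0 ≤ a) (hα : 0 < α) :
    ∫ x in Ioo 0 a, rexp ((x - a) / α) ^ 2 ≤ α / 2 := by
  have hsq : ∀ x, rexp ((x - a) / α) ^ 2 = rexp (-(2 * a / α)) * rexp (2 / α * x) := by
    intro x
    rw [← Real.exp_add, sq, ← Real.exp_add]
    congr 1
    field_simp
    ring
  simp_rw [hsq]
  rw [integral_const_mul, integral_Ioo_exp_mul (by positivity) ha, mul_div_assoc', mul_sub,
    ← Real.exp_add, show -(2 * a / α) + 2 / α * a = 0 by ring, Real.exp_zero, mul_one,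
    div_le_iff₀ (by positivity)]
  have hα2 : α / 2 * (2 / α) = 1 := by field_simp
  nlinarith [Real.exp_pos (-(2 * a / α))]

lemma sqrt_integral_sq_norm_le_of_norm_le_exp {E : Type*} [NormedAddCommGroup E] {f : ℝ → E}
    {a α M : ℝ} (ha : 0 ≤ a) (hα : 0 < α) (hM : 0 ≤ M)
    (hf : ∀ x ∈ Ioo 0 a, ‖f x‖ ≤ M * rexp ((x - a) / α)) :
    √(∫ x in Ioo 0 a, ‖f x‖ ^ 2) ≤ M * √(α / 2) := by
  have hint : ∫ x in Ioo 0 a, ‖f x‖ ^ 2 ≤ M ^ 2 * (α / 2) :=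
    calc ∫ x in Ioo 0 a, ‖f x‖ ^ 2 ≤ ∫ x in Ioo 0 a, M ^ 2 * rexp ((x - a) / α) ^ 2 := by
          refine integral_mono_of_nonneg (.of_forall fun _ => by positivity)
            ((Continuous.integrableOn_Ioc (by fun_prop)).mono_set Ioo_subset_Ioc_self)
            ((ae_restrict_iff' measurableSet_Ioo).2 (.of_forall fun x hx => ?_))
          change ‖f x‖ ^ 2 ≤ M ^ 2 * rexp ((x - a) / α) ^ 2
          rw [← mul_pow]
          exact pow_le_pow_left₀ (norm_nonneg _) (hf x hx) 2
      _ = M ^ 2 * ∫ x in Ioo 0 a, rexp ((x - a) / α) ^ 2 := integral_const_mul _ _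
      _ ≤ M ^ 2 * (α / 2) := by gcongr; exact integral_Ioo_exp_sub_div_sq_le ha hα
  calc √(∫ x in Ioo 0 a, ‖f x‖ ^ 2) ≤ √(M ^ 2 * (α / 2)) := Real.sqrt_le_sqrt hint
    _ = M * √(α / 2) := by rw [Real.sqrt_mul (sq_nonneg M), Real.sqrt_sq hM]

lemma norm_cexp_mul_ofReal (p : ℂ) (x : ℝ) : ‖cexp (p * x)‖ = rexp (p.re * x) := by
  simp [Complex.norm_exp]

lemma norm_cexp_mul_ofReal_le_one {p : ℂ} (hp : p.re ≤ 0) {x : ℝ} (hx : 0 ≤ x) :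
    ‖cexp (p * x)‖ ≤ 1 := by
  rw [norm_cexp_mul_ofReal]
  exact Real.exp_le_one_iff.2 (mul_nonpos_of_nonpos_of_nonneg hp hx)

lemma hasDerivAt_cexp_mul_ofReal (p : ℂ) (x : ℝ) :
    HasDerivAt (fun x : ℝ => cexp (p * x)) (p * cexp (p * x)) x := by
  simpa [mul_comm] using (((hasDerivAt_id (x : ℂ)).const_mul p).cexp).comp_ofReal

section TwoExponentials

variable {p q : ℂ} {x : ℝ}

lemma norm_cexp_sub_cexp_le_two (hp : p.re ≤ 0) (hq : q.re ≤ 0) (hx : 0 ≤ x) :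
    ‖cexp (p * x) - cexp (q * x)‖ ≤ 2 :=
  (norm_sub_le _ _).trans (by
    linarith [norm_cexp_mul_ofReal_le_one hp hx, norm_cexp_mul_ofReal_le_one hq hx])

lemma norm_mul_cexp_sub_mul_cexp_le (hp : p.re ≤ 0) (hq : q.re ≤ 0) (hx : 0 ≤ x) :
    ‖p * cexp (p * x) - q * cexp (q * x)‖ ≤ ‖p‖ + ‖q‖ := by
  refine (norm_sub_le _ _).trans ?_
  rw [norm_mul, norm_mul]
  exact add_le_add (mul_le_of_le_one_right (norm_nonneg p) (norm_cexp_mul_ofReal_le_one hp hx))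
    (mul_le_of_le_one_right (norm_nonneg q) (norm_cexp_mul_ofReal_le_one hq hx))

lemma exp_sub_two_mul_exp_le_sq_norm_cexp_sub_cexp (hp : p.re ≤ 0) (hqp : q.re ≤ p.re)
    (hx : 0 ≤ x) :
    rexp (2 * p.re * x) - 2 * rexp (q.re * x) ≤ ‖cexp (p * x) - cexp (q * x)‖ ^ 2 := by
  have hA : rexp (p.re * x) ≤ 1 := Real.exp_le_one_iff.2 (mul_nonpos_of_nonpos_of_nonneg hp hx)
  have hBA : rexp (q.re * x) ≤ rexp (p.re * x) :=
    Real.exp_le_exp.2 (mul_le_mul_of_nonneg_right hqp hx)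
  have hnorm : rexp (p.re * x) - rexp (q.re * x) ≤ ‖cexp (p * x) - cexp (q * x)‖ := by
    rw [← norm_cexp_mul_ofReal, ← norm_cexp_mul_ofReal]
    exact norm_sub_norm_le _ _
  have hsq : rexp (2 * p.re * x) = rexp (p.re * x) ^ 2 := by
    rw [sq, ← Real.exp_add]
    ring_nf
  rw [hsq]
  nlinarith [pow_le_pow_left₀ (sub_nonneg.2 hBA) hnorm 2, Real.exp_pos (q.re * x)]

lemma integral_sq_norm_cexp_sub_cexp_ge (hp : p.re < 0) (hqp : q.re ≤ p.re) {a : ℝ}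
    (ha : 0 ≤ a) :
    (1 - rexp (2 * p.re * a)) / -(2 * p.re) - 2 / -q.re ≤
      ∫ x in Ioo 0 a, ‖cexp (p * x) - cexp (q * x)‖ ^ 2 := by
  have hq : q.re < 0 := hqp.trans_lt hp
  have hint : ∀ r : ℝ, IntegrableOn (fun x => rexp (r * x)) (Ioo 0 a) :=
    fun r => (Continuous.integrableOn_Ioc (by fun_prop)).mono_set Ioo_subset_Ioc_self
  calc (1 - rexp (2 * p.re * a)) / -(2 * p.re) - 2 / -q.re
      ≤ (rexp (2 * p.re * a) - 1) / (2 * p.re) - 2 * ((rexp (q.re * a) - 1) / q.re) := by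
        rw [div_neg, div_neg, ← neg_div, neg_sub, mul_div_assoc']
        gcongr
        rw [div_le_iff_of_neg hq, neg_mul, div_mul_cancel₀ _ hq.ne]
        linarith [Real.exp_pos (q.re * a)]
    _ = ∫ x in Ioo 0 a, (rexp (2 * p.re * x) - 2 * rexp (q.re * x)) := by
        rw [integral_sub (hint _) ((hint _).const_mul 2), integral_const_mul,
          integral_Ioo_exp_mul (by linarith) ha, integral_Ioo_exp_mul hq.ne ha]
    _ ≤ ∫ x in Ioo 0 a, ‖cexp (p * x) - cexp (q * x)‖ ^ 2 :=
        setIntegral_mono_on ((hint _).sub ((hint _).const_mul 2))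
          ((Continuous.integrableOn_Ioc (by fun_prop)).mono_set Ioo_subset_Ioc_self)
          measurableSet_Ioo fun x hx =>
            exp_sub_two_mul_exp_le_sq_norm_cexp_sub_cexp hp.le hqp hx.1.le

end TwoExponentials

lemma hasDerivAt_cexp_sub_div (a α x : ℝ) :
    HasDerivAt (fun x : ℝ => cexp (((x - a) / α : ℝ) : ℂ))
      ((α : ℂ)⁻¹ * cexp (((x - a) / α : ℝ) : ℂ)) x := by
  have hg : HasDerivAt (fun x : ℝ => (x - a) / α) α⁻¹ x := by
    simpa [one_div] using ((hasDerivAt_id x).sub_const a).div_const α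
  simpa [mul_comm] using hg.ofReal_comp.cexp

lemma deriv_one_sub_cexp_sub_div (a α : ℝ) :
    deriv (fun x : ℝ => 1 - cexp (((x - a) / α : ℝ) : ℂ)) =
      fun x => -((α : ℂ)⁻¹ * cexp (((x - a) / α : ℝ) : ℂ)) :=
  funext fun x => ((hasDerivAt_cexp_sub_div a α x).const_sub 1).deriv

lemma deriv_deriv_one_sub_cexp_sub_div (a α : ℝ) :
    deriv (deriv fun x : ℝ => 1 - cexp (((x - a) / α : ℝ) : ℂ)) =
      fun x => -((α : ℂ)⁻¹ * ((α : ℂ)⁻¹ * cexp (((x - a) / α : ℝ) : ℂ))) := by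
  rw [deriv_one_sub_cexp_sub_div]
  exact funext fun x => ((hasDerivAt_cexp_sub_div a α x).const_mul _).neg.deriv

lemma norm_cutoff_error_le {b α A A' : ℝ} (hb : 0 < b) (hα : 0 < α) {u u' e : ℂ}
    (hu : ‖u‖ ≤ A) (hu' : ‖u'‖ ≤ A') :
    ‖2 / (b : ℂ) * u' * -((α : ℂ)⁻¹ * e) + 1 / (b : ℂ) * u * -((α : ℂ)⁻¹ * ((α : ℂ)⁻¹ * e)) +
        u * -((α : ℂ)⁻¹ * e)‖ ≤ (2 * A' / (b * α) + A / (b * α ^ 2) + A / α) * ‖e‖ := by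
  refine norm_add₃_le.trans ?_
  simp only [norm_mul, norm_neg, norm_div, norm_inv, Complex.norm_real, Real.norm_of_nonneg hb.le,
    Real.norm_of_nonneg hα.le, Complex.norm_ofNat, norm_one]
  calc 2 / b * ‖u'‖ * (α⁻¹ * ‖e‖) + 1 / b * ‖u‖ * (α⁻¹ * (α⁻¹ * ‖e‖)) + ‖u‖ * (α⁻¹ * ‖e‖)
      ≤ 2 / b * A' * (α⁻¹ * ‖e‖) + 1 / b * A * (α⁻¹ * (α⁻¹ * ‖e‖)) + A * (α⁻¹ * ‖e‖) := by
        gcongr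
    _ = (2 * A' / (b * α) + A / (b * α ^ 2) + A / α) * ‖e‖ := by
        field_simp

section CutoffErrors

variable {p q : ℂ} {a α : ℝ} {u v : ℝ → ℂ} (k : ℝ)

lemma sqrt_integral_sq_norm_sub_mul_cutoff_le (hp : p.re ≤ 0) (hq : q.re ≤ 0) (ha : 0 ≤ a)
    (hα : 0 < α) (hu : u = fun x : ℝ => (k : ℂ) * (cexp (p * x) - cexp (q * x)))
    (hv : v = fun x : ℝ => 1 - cexp (((x - a) / α : ℝ) : ℂ)) :
    √(∫ x in Ioo 0 a, ‖u x - u x * v x‖ ^ 2) ≤ 2 * |k| * √(α / 2) := by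
  refine sqrt_integral_sq_norm_le_of_norm_le_exp ha hα (by positivity) fun x hx => ?_
  have hcut : u x - u x * v x =
      k * (cexp (p * x) - cexp (q * x)) * cexp (((x - a) / α : ℝ) : ℂ) := by
    subst hu hv
    ring
  rw [hcut, norm_mul, norm_mul, Complex.norm_real, Complex.norm_exp_ofReal, Real.norm_eq_abs,
    mul_comm 2 |k|]
  gcongr
  exact norm_cexp_sub_cexp_le_two hp hq hx.1.le

lemma sqrt_integral_sq_norm_cutoff_error_le {b : ℝ} (hp : p.re ≤ 0) (hq : q.re ≤ 0)
    (ha : 0 ≤ a) (hb : 0 < b) (hα : 0 < α)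
    (hu : u = fun x : ℝ => (k : ℂ) * (cexp (p * x) - cexp (q * x)))
    (hv : v = fun x : ℝ => 1 - cexp (((x - a) / α : ℝ) : ℂ)) :
    √(∫ x in Ioo 0 a, ‖2 / (b : ℂ) * deriv u x * deriv v x +
        (1 / (b : ℂ)) * u x * deriv (deriv v) x + u x * deriv v x‖ ^ 2) ≤
      (2 * (‖p‖ + ‖q‖) / (b * α) + 2 / (b * α ^ 2) + 2 / α) * |k| * √(α / 2) := by
  have hu' : deriv u = fun x : ℝ => (k : ℂ) * (p * cexp (p * x) - q * cexp (q * x)) := by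
    subst hu
    exact funext fun x => (((hasDerivAt_cexp_mul_ofReal p x).sub
      (hasDerivAt_cexp_mul_ofReal q x)).const_mul _).deriv
  subst hv
  rw [deriv_deriv_one_sub_cexp_sub_div, deriv_one_sub_cexp_sub_div]
  refine sqrt_integral_sq_norm_le_of_norm_le_exp ha hα (by positivity) fun x hx => ?_
  have hux : ‖u x‖ ≤ 2 * |k| := by
    rw [hu, norm_mul, Complex.norm_real, Real.norm_eq_abs, mul_comm 2]
    gcongr
    exact norm_cexp_sub_cexp_le_two hp hq hx.1.le
  have hux' : ‖deriv u x‖ ≤ |k| * (‖p‖ + ‖q‖) := by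
    rw [hu', norm_mul, Complex.norm_real, Real.norm_eq_abs]
    gcongr
    exact norm_mul_cexp_sub_mul_cexp_le hp hq hx.1.le
  convert norm_cutoff_error_le hb hα hux hux' using 1
  rw [Complex.norm_exp_ofReal]
  ring

end CutoffErrors

lemma re_ofReal_add_I_mul (r s : ℝ) : ((r : ℂ) + Complex.I * s).re = r := by
  simp

lemma re_ofReal_sub_I_mul (r s : ℝ) : ((r : ℂ) - Complex.I * s).re = r := by
  simp

lemma pseudomode_exponent_eq {a b : ℝ} (ha : a ≠ 0) (hb : b ≠ 0) (c σ : ℝ) :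
    -(b : ℂ) / 2 + b * ((1 / 2 - c / (a * b) : ℝ) : ℂ) + Complex.I * σ =
      ((-(c / a) : ℝ) : ℂ) + Complex.I * σ := by
  have : (a : ℂ) ≠ 0 := by exact_mod_cast ha
  have : (b : ℂ) ≠ 0 := by exact_mod_cast hb
  push_cast
  field_simp
  ring

lemma pseudomode_exponent_conj_eq {a b : ℝ} (ha : a ≠ 0) (hb : b ≠ 0) (c σ : ℝ) :
    -(b : ℂ) / 2 - b * ((1 / 2 - c / (a * b) : ℝ) : ℂ) - Complex.I * σ =
      ((-(b - c / a) : ℝ) : ℂ) - Complex.I * σ := by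
  have : (a : ℂ) ≠ 0 := by exact_mod_cast ha
  have : (b : ℂ) ≠ 0 := by exact_mod_cast hb
  push_cast
  field_simp
  ring

lemma norm_add_norm_pseudomode_exponents_le {b ε : ℝ} (σ : ℝ) (hε : 0 ≤ ε) (hεb : ε ≤ b) :
    ‖((-ε : ℝ) : ℂ) + Complex.I * σ‖ + ‖((-(b - ε) : ℝ) : ℂ) - Complex.I * σ‖ ≤
      2 * (b + |σ|) := by
  have h₁ := norm_add_le ((-ε : ℝ) : ℂ) (Complex.I * σ)
  have h₂ := norm_sub_le ((-(b - ε) : ℝ) : ℂ) (Complex.I * σ)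
  simp only [Complex.norm_real, norm_mul, Complex.norm_I, one_mul, Real.norm_eq_abs, abs_neg,
    abs_of_nonneg hε, abs_of_nonneg (sub_nonneg.2 hεb)] at h₁ h₂
  linarith

lemma integral_sq_norm_pseudomode_ge {a b ε : ℝ} (σ : ℝ) (ha : 0 ≤ a) (hε : 0 < ε)
    (hεb : 2 * ε ≤ b) :
    (1 - rexp (-(2 * ε * a))) / (2 * ε) - 4 / b ≤
      ∫ x in Ioo 0 a, ‖cexp ((((-ε : ℝ) : ℂ) + Complex.I * σ) * x) -
        cexp ((((-(b - ε) : ℝ) : ℂ) - Complex.I * σ) * x)‖ ^ 2 := by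
  refine le_trans ?_ (integral_sq_norm_cexp_sub_cexp_ge
    (by rw [re_ofReal_add_I_mul]; linarith)
    (by rw [re_ofReal_add_I_mul, re_ofReal_sub_I_mul]; linarith) ha)
  rw [re_ofReal_add_I_mul, re_ofReal_sub_I_mul, neg_neg, show 2 * -ε * a = -(2 * ε * a) by ring,
    show -(2 * -ε) = 2 * ε by ring]
  refine sub_le_sub_left ?_ _
  rw [div_le_div_iff₀ (by linarith) (by linarith)]
  linarith

lemma sq_le_inv_of_integral_sq_norm_const_mul_eq_one {f : ℝ → ℂ} {s : Set ℝ} {k L : ℝ}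
    (hL : 0 < L) (hLf : L ≤ ∫ x in s, ‖f x‖ ^ 2) (hk : ∫ x in s, ‖(k : ℂ) * f x‖ ^ 2 = 1) :
    k ^ 2 ≤ L⁻¹ := by
  simp only [norm_mul, mul_pow, Complex.norm_real, Real.norm_eq_abs, sq_abs] at hk
  rw [integral_const_mul] at hk
  rw [eq_inv_of_mul_eq_one_left hk]
  exact inv_anti₀ hL hLf

lemma abs_le_of_pseudomode_normalized {a c : ℝ} (b σ k : ℝ) (ha : 0 < a) (hc : 0 < c)
    (hab : 2 * c ≤ a * b) (hlarge : 16 * c ≤ a * b * (1 - rexp (-(2 * c))))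
    (hk : ∫ x in Ioo 0 a, ‖(k : ℂ) * (cexp ((((-(c / a) : ℝ) : ℂ) + Complex.I * σ) * x) -
        cexp ((((-(b - c / a) : ℝ) : ℂ) - Complex.I * σ) * x))‖ ^ 2 = 1) :
    |k| ≤ √2 * rexp c * (√a)⁻¹ * √(2 * c / (rexp (2 * c) - 1)) := by
  have hE : rexp (-(2 * c)) < 1 := Real.exp_lt_one_iff.2 (by linarith)
  have hlow : a * (1 - rexp (-(2 * c))) / (4 * c) ≤ ∫ x in Ioo 0 a,
      ‖cexp ((((-(c / a) : ℝ) : ℂ) + Complex.I * σ) * x) -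
        cexp ((((-(b - c / a) : ℝ) : ℂ) - Complex.I * σ) * x)‖ ^ 2 := by
    refine le_trans ?_ (integral_sq_norm_pseudomode_ge σ ha.le (div_pos hc ha) ?_)
    · have hb : 0 < b := by nlinarith
      have h4b : 4 / b ≤ a * (1 - rexp (-(2 * c))) / (4 * c) := by
        rw [div_le_div_iff₀ hb (by positivity)]
        linarith
      rw [show 2 * (c / a) * a = 2 * c by field_simp,
        show (1 - rexp (-(2 * c))) / (2 * (c / a)) = a * (1 - rexp (-(2 * c))) / (2 * c) by
          field_simp]
      have h2c : a * (1 - rexp (-(2 * c))) / (2 * c) =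
          2 * (a * (1 - rexp (-(2 * c))) / (4 * c)) := by
        field_simp
        ring
      linarith
    · rw [mul_div_assoc', div_le_iff₀ ha]
      linarith
  refine (Real.abs_le_sqrt (sq_le_inv_of_integral_sq_norm_const_mul_eq_one
    (div_pos (mul_pos ha (by linarith)) (by positivity)) hlow hk)).trans_eq ?_
  have he : rexp (2 * c) - 1 ≠ 0 := by
    linarith [Real.add_one_lt_exp (by positivity : 2 * c ≠ 0)]
  rw [← Real.sqrt_sq (Real.exp_pos c).le, ← Real.sqrt_inv, ← Real.sqrt_mul zero_le_two,
    ← Real.sqrt_mul (by positivity), ← Real.sqrt_mul (by positivity)]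
  congr 1
  rw [Real.exp_neg, sq, ← Real.exp_add, ← two_mul]
  field_simp
  ring

lemma sqrt_integral_pseudomode_errors_le {a b c α : ℝ} (σ k : ℝ) (hb : 0 < b) (hα : 0 < α)
    (hc : 0 < c)
    (hab : 2 * c < a * b) (hlarge : 16 * c ≤ a * b * (1 - rexp (-(2 * c)))) {u v : ℝ → ℂ}
    (hu : u = fun x : ℝ => (k : ℂ) * (cexp ((((-(c / a) : ℝ) : ℂ) + Complex.I * σ) * x) -
        cexp ((((-(b - c / a) : ℝ) : ℂ) - Complex.I * σ) * x)))
    (hv : v = fun x : ℝ => 1 - cexp (((x - a) / α : ℝ) : ℂ))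
    (hk : ∫ x in Ioo 0 a, ‖u x‖ ^ 2 = 1) :
    √(∫ x in Ioo 0 a, ‖u x - u x * v x‖ ^ 2) +
        √(∫ x in Ioo 0 a, ‖2 / (b : ℂ) * deriv u x * deriv v x +
          (1 / (b : ℂ)) * u x * deriv (deriv v) x + u x * deriv v x‖ ^ 2) ≤
      (2 + (2 * (2 * (b + |σ|)) / (b * α) + 2 / (b * α ^ 2) + 2 / α)) * √α * rexp c *
        (√a)⁻¹ * √(2 * c / (rexp (2 * c) - 1)) := by
  have ha : 0 < a := pos_of_mul_pos_left (by linarith : 0 < a * b) hb.le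
  have hca : c / a ≤ b / 2 := by
    rw [div_le_div_iff₀ ha two_pos]
    linarith
  set p : ℂ := ((-(c / a) : ℝ) : ℂ) + Complex.I * σ
  set q : ℂ := ((-(b - c / a) : ℝ) : ℂ) - Complex.I * σ
  have hp : p.re ≤ 0 := (re_ofReal_add_I_mul _ σ).trans_le (neg_nonpos.2 (by positivity))
  have hq : q.re ≤ 0 := (re_ofReal_sub_I_mul _ σ).trans_le (by linarith)
  have hpq : ‖p‖ + ‖q‖ ≤ 2 * (b + |σ|) :=
    norm_add_norm_pseudomode_exponents_le σ (by positivity) (by linarith)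
  have habs := abs_le_of_pseudomode_normalized b σ k ha hc hab.le hlarge (by rwa [hu] at hk)
  calc _ ≤ 2 * |k| * √(α / 2) +
        (2 * (‖p‖ + ‖q‖) / (b * α) + 2 / (b * α ^ 2) + 2 / α) * |k| * √(α / 2) :=
        add_le_add (sqrt_integral_sq_norm_sub_mul_cutoff_le _ hp hq ha.le hα hu hv)
          (sqrt_integral_sq_norm_cutoff_error_le _ hp hq ha.le hb hα hu hv)
    _ ≤ (2 + (2 * (2 * (b + |σ|)) / (b * α) + 2 / (b * α ^ 2) + 2 / α)) * |k| * √(α / 2) := by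
        rw [← add_mul, ← add_mul]
        gcongr
    _ ≤ (2 + (2 * (2 * (b + |σ|)) / (b * α) + 2 / (b * α ^ 2) + 2 / α)) *
          (√2 * rexp c * (√a)⁻¹ * √(2 * c / (rexp (2 * c) - 1))) * √(α / 2) := by
        gcongr
    _ = _ := by
        rw [show √α = √2 * √(α / 2) by rw [← Real.sqrt_mul zero_le_two]; ring_nf]
        ring

/-- Let `δ = 1/2 − c/(ab)` with `0 < c < ab/2`,
`u_σ(x) = k(e^{(−b/2+bδ+iσ)x} − e^{(−b/2−bδ−iσ)x})` normalized in `L²(0,a)`,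
`w_σ = u_σ v` with `v(x) = 1 − e^{(x−a)/α}`, and
`μ_σ = b⁻¹(−b/2+bδ+iσ)² + (−b/2+bδ+iσ)`, so that
`Aw_σ − μ_σ w_σ = 2b⁻¹ u_σ′ v′ + b⁻¹ u_σ v″ + u_σ v′`.  Then there is a constant `K`
(depending on `α, b, σ`) with
`‖u_σ − w_σ‖ + ‖Aw_σ − μ_σ w_σ‖ ≤ K a^{−1/2} (2c/(e^{2c} − 1))^{1/2}`
for all sufficiently large `a`. -/
theorem convection_diffusion_pseudomode_error
    (b α c σ : ℝ) (hb : 0 < b) (hα : 0 < α) (hc : 0 < c)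
    (δ : ℝ → ℝ) (hδ : ∀ a : ℝ, δ a = 1 / 2 - c / (a * b))
    (z : ℝ → ℂ)
    (hz : ∀ a : ℝ, z a = -(b : ℂ) / 2 + (b : ℂ) * (δ a : ℂ) + Complex.I * (σ : ℂ))
    (U0 : ℝ → ℝ → ℂ)
    (hU0 : ∀ a : ℝ, U0 a = fun x : ℝ =>
      Complex.exp (z a * (x : ℂ)) -
      Complex.exp ((-(b : ℂ) / 2 - (b : ℂ) * (δ a : ℂ) - Complex.I * (σ : ℂ)) * (x : ℂ)))
    (k : ℝ → ℝ)
    (hknorm : ∀ a : ℝ, 0 < a → c < a * b / 2 →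
      (∫ x in Set.Ioo (0 : ℝ) a, ‖(k a : ℂ) * U0 a x‖ ^ 2) = 1)
    (U : ℝ → ℝ → ℂ) (hU : ∀ a : ℝ, U a = fun x : ℝ => (k a : ℂ) * U0 a x)
    (V : ℝ → ℝ → ℂ)
    (hV : ∀ a : ℝ, V a = fun x : ℝ => 1 - Complex.exp (((x - a) / α : ℝ) : ℂ))
    (Err : ℝ → ℝ → ℂ)
    (hErr : ∀ a : ℝ, Err a = fun x : ℝ =>
      2 / (b : ℂ) * deriv (U a) x * deriv (V a) x +
      (1 / (b : ℂ)) * U a x * deriv (deriv (V a)) x +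
      U a x * deriv (V a) x) :
    ∃ K : ℝ, ∀ᶠ a in Filter.atTop,
      Real.sqrt (∫ x in Set.Ioo (0 : ℝ) a, ‖U a x - U a x * V a x‖ ^ 2) +
        Real.sqrt (∫ x in Set.Ioo (0 : ℝ) a, ‖Err a x‖ ^ 2) ≤
          K * (Real.sqrt a)⁻¹ * Real.sqrt (2 * c / (Real.exp (2 * c) - 1)) := by
  refine ⟨(2 + (2 * (2 * (b + |σ|)) / (b * α) + 2 / (b * α ^ 2) + 2 / α)) * √α * rexp c, ?_⟩
  have hE : 0 < 1 - rexp (-(2 * c)) := sub_pos.2 (Real.exp_lt_one_iff.2 (by linarith))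
  filter_upwards [eventually_gt_atTop (2 * c / b),
    eventually_ge_atTop (16 * c / (b * (1 - rexp (-(2 * c)))))] with a hab hlarge
  have ha : 0 < a := (by positivity : 0 < 2 * c / b).trans hab
  rw [div_lt_iff₀ hb] at hab
  rw [div_le_iff₀ (by positivity), ← mul_assoc] at hlarge
  have hU0a : U0 a = fun x : ℝ => cexp ((((-(c / a) : ℝ) : ℂ) + Complex.I * σ) * x) -
      cexp ((((-(b - c / a) : ℝ) : ℂ) - Complex.I * σ) * x) := by
    rw [hU0, hz, hδ, pseudomode_exponent_eq ha.ne' hb.ne',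
      pseudomode_exponent_conj_eq ha.ne' hb.ne']
  simp only [hErr]
  exact sqrt_integral_pseudomode_errors_le σ (k a) hb hα hc hab hlarge (by rw [hU, hU0a]) (hV a)
    (by simpa only [hU] using hknorm a ha (by linarith))
end
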